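/- Fix ε ∈ (0,1/2) and k ∈ ℕ with k ≥ 2. For any nonnegative integer m with m ≤ (k−1)(1 + ε/2), every function g' ∈ F_{m+1}(H) satisfies dist(g', F_k(H)) < ε/2. -/

import Mathlib

/-!
A function in `F_{n+1}` has `n + 1` pieces, disjoint intervals, so one of them meets `(0, 1)` in
measure at most `1 / (n + 1)`. Deleting a threshold next to that piece and letting the neighbouring
function take over yields a function of `F_n` that differs from the original only on that piece.
Repeating this `j` times takes `F_{k+j}` to `F_k` at distance at most `j / (k + 1)`, and for
`j = m + 1 - k ≤ (k - 1) ε / 2` this is less than `ε / 2`. If `m + 1 ≤ k`, then already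
`F_{m+1} ⊆ F_k`.
-/

open MeasureTheory Set

noncomputable section

open scoped Classical

/-- Distance between two functions under the uniform distribution on (0,1):
`P(x : f(x) ≠ g(x))`. -/
def distP {Y : Type*} (f g : ℝ → Y) : ℝ :=
  (volume {x : ℝ | x ∈ Set.Ioo (0:ℝ) 1 ∧ f x ≠ g x}).toReal

/-- Distance of `f` from a class of functions `F`: `inf_{g ∈ F} dist(f,g)`. -/
def distToClass {Y : Type*} (f : ℝ → Y) (F : Set (ℝ → Y)) : ℝ :=
  ⨅ g : F, distP f g

/-- The zero-measure crossings property. -/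
def ZeroMeasureCrossings {Y : Type*} (H : Set (ℝ → Y)) : Prop :=
  ∀ h ∈ H, ∀ h' ∈ H, h ≠ h' → volume {x : ℝ | h x = h' x} = 0

/-- `f` is a `k`-piecewise function with pieces from `H`: there are thresholds
`t 0 = -∞ ≤ t 1 ≤ ⋯ ≤ t (k-1) ≤ t k = ∞` (with `t i` real for `1 ≤ i ≤ k-1`)
and functions `h 1, …, h k ∈ H` with `f x = h i x` whenever `t (i-1) < x ≤ t i`. -/
def Piecewise {Y : Type*} (H : Set (ℝ → Y)) (k : ℕ) (f : ℝ → Y) : Prop :=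
  ∃ (t : ℕ → EReal) (h : ℕ → ℝ → Y),
    t 0 = ⊥ ∧ t k = ⊤ ∧
    (∀ i : ℕ, t i ≤ t (i + 1)) ∧
    (∀ i : ℕ, 1 ≤ i → i ≤ k - 1 → ∃ r : ℝ, t i = (r : EReal)) ∧
    (∀ i : ℕ, 1 ≤ i → i ≤ k → h i ∈ H) ∧
    (∀ x : ℝ, ∀ i : ℕ, 1 ≤ i → i ≤ k →
      t (i - 1) < (x : EReal) → (x : EReal) ≤ t i → f x = h i x)

/-- The class `F_k(H)` of `k`-piecewise functions with pieces in `H`. -/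
def Fclass {Y : Type*} (H : Set (ℝ → Y)) (k : ℕ) : Set (ℝ → Y) :=
  {f | Piecewise H k f}

/-- The instantaneous noise sensitivity `NS_δ(f, x; H)`:
`inf_{h ∈ H, h(x) = f(x)} P(h(x') ≠ f(x'))` with `x' ~ Uniform(x-δ, x+δ)`,
defined to be `1` when no `h ∈ H` has `h x = f x`. -/
def insNS {Y : Type*} (H : Set (ℝ → Y)) (δ : ℝ) (f : ℝ → Y) (x : ℝ) : ℝ :=
  if ({h : ℝ → Y | h ∈ H ∧ h x = f x}).Nonempty then
    ⨅ h : {h : ℝ → Y | h ∈ H ∧ h x = f x},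
      (volume {t : ℝ | t ∈ Set.Ioo (x - δ) (x + δ) ∧ (h : ℝ → Y) t ≠ f t}).toReal / (2 * δ)
  else 1

/-- The noise sensitivity `NS_δ(f; H) = ∫₀¹ NS_δ(f, z; H) dz`. -/
def NS {Y : Type*} (H : Set (ℝ → Y)) (δ : ℝ) (f : ℝ → Y) : ℝ :=
  ∫ z in Set.Ioo (0:ℝ) 1, insNS H δ f z

/-- The smoothed agreement function `f_δ^h(x) = (1/(2δ)) ∫_{x-δ}^{x+δ} 1[f(t) = h(t)] dt`. -/
def smooth {Y : Type*} (δ : ℝ) (f h : ℝ → Y) (x : ℝ) : ℝ :=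
  (1 / (2 * δ)) * ∫ t in (x - δ)..(x + δ), (if f t = h t then (1:ℝ) else 0)

/-- The degree-at-most-`p` polynomial function with coefficients `α`. -/
def polyFun (p : ℕ) (α : Fin (p + 1) → ℝ) : ℝ → ℝ :=
  fun x => ∑ i : Fin (p + 1), α i * x ^ (i : ℕ)

/-- A collection `C` of subsets of `Z` shatters a finite set `S`. -/
def ShattersC {Z : Type*} (C : Set (Set Z)) (S : Finset Z) : Prop :=
  ∀ T : Finset Z, T ⊆ S → ∃ c ∈ C, (S : Set Z) ∩ c = (T : Set Z)

/-- The graph `{(x, g(x)) : x ∈ ℝ}` of a function `g : ℝ → Y`. -/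
def graphOf {Y : Type*} (g : ℝ → Y) : Set (ℝ × Y) :=
  {p : ℝ × Y | p.2 = g p.1}

/-- The collection of graphs of the functions in `G`. -/
def graphs {Y : Type*} (G : Set (ℝ → Y)) : Set (Set (ℝ × Y)) :=
  {s | ∃ g ∈ G, s = graphOf g}

end

open Function

noncomputable abbrev uniform01 : Measure ℝ := volume.restrict (Ioo 0 1)

section Distance

variable {Y : Type*}

lemma distP_eq_measureReal (f g : ℝ → Y) : distP f g = uniform01.real {x | f x ≠ g x} := by
  rw [distP, measureReal_def, Measure.restrict_apply' measurableSet_Ioo]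
  congr 2
  ext x
  exact and_comm

lemma distP_self (f : ℝ → Y) : distP f f = 0 := by
  simp [distP]

lemma distP_triangle (f g h : ℝ → Y) : distP f h ≤ distP f g + distP g h := by
  simp only [distP_eq_measureReal]
  refine (measureReal_mono fun x (hx : f x ≠ h x) => ?_).trans (measureReal_union_le _ _)
  by_cases hfg : f x = g x
  · exact Or.inr (show g x ≠ h x from hfg ▸ hx)
  · exact Or.inl hfg

lemma distToClass_le_distP (f : ℝ → Y) {F : Set (ℝ → Y)} {g : ℝ → Y} (hg : g ∈ F) :
    distToClass f F ≤ distP f g :=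
  ciInf_le ⟨0, by rintro _ ⟨g, rfl⟩; exact ENNReal.toReal_nonneg⟩ (⟨g, hg⟩ : F)

end Distance

lemma Finset.exists_card_mul_measureReal_le {α ι : Type*} [MeasurableSpace α] (μ : Measure α)
    [IsFiniteMeasure μ] {s : Finset ι} (hs : s.Nonempty) {A : ι → Set α}
    (hd : (s : Set ι).PairwiseDisjoint A) (hA : ∀ i ∈ s, MeasurableSet (A i)) :
    ∃ i ∈ s, s.card * μ.real (A i) ≤ μ.real (⋃ i ∈ s, A i) := by
  obtain ⟨i, hi, hmin⟩ := s.exists_min_image (fun i => μ.real (A i)) hs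
  refine ⟨i, hi, ?_⟩
  rw [measureReal_biUnion_finset hd hA, ← nsmul_eq_mul]
  exact s.card_nsmul_le_sum _ _ hmin

section Thresholds

def piece (t : ℕ → EReal) (i : ℕ) : Set ℝ := (↑) ⁻¹' Ioc (t (i - 1)) (t i)

noncomputable def pieceIdx (t : ℕ → EReal) (x : ℝ) : ℕ := sInf {i | (x : EReal) ≤ t i}

structure IsThresholds (n : ℕ) (t : ℕ → EReal) : Prop where
  zero : t 0 = ⊥
  last : t n = ⊤
  mono : Monotone t
  real : ∀ i, 1 ≤ i → i ≤ n - 1 → ∃ r : ℝ, t i = r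

variable {t : ℕ → EReal}

lemma measurableSet_piece (t : ℕ → EReal) (i : ℕ) : MeasurableSet (piece t i) :=
  measurable_coe_real_ereal measurableSet_Ioc

lemma pieceIdx_eq_of_mem_piece (ht : Monotone t) {x : ℝ} {i : ℕ} (hx : x ∈ piece t i) :
    pieceIdx t x = i := by
  refine le_antisymm (Nat.sInf_le hx.2) (le_csInf ⟨i, hx.2⟩ fun j (hj : (x : EReal) ≤ t j) => ?_)
  by_contra! hji
  exact (hj.trans (ht (Nat.le_sub_one_of_lt hji))).not_gt hx.1

lemma pairwise_disjoint_piece (ht : Monotone t) : Pairwise (Disjoint on piece t) :=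
  fun _ _ hij => disjoint_left.2 fun _ hi hj =>
    hij ((pieceIdx_eq_of_mem_piece ht hi).symm.trans (pieceIdx_eq_of_mem_piece ht hj))

lemma IsThresholds.mem_piece_pieceIdx {n : ℕ} (ht : IsThresholds n t) (x : ℝ) :
    1 ≤ pieceIdx t x ∧ pieceIdx t x ≤ n ∧ x ∈ piece t (pieceIdx t x) := by
  have hn : n ∈ {i | (x : EReal) ≤ t i} := by simp [ht.last]
  have hmem : (x : EReal) ≤ t (pieceIdx t x) := Nat.sInf_mem ⟨n, hn⟩
  have hpos : pieceIdx t x ≠ 0 := fun h0 => by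
    rw [h0, ht.zero] at hmem
    exact EReal.coe_ne_bot x (le_bot_iff.1 hmem)
  refine ⟨Nat.one_le_iff_ne_zero.2 hpos, Nat.sInf_le hn, ?_, hmem⟩
  exact lt_of_not_ge (Nat.notMem_of_lt_sInf (Nat.sub_one_lt hpos))

end Thresholds

section Piecewise

variable {Y : Type*} {H : Set (ℝ → Y)}

lemma piecewise_iff_exists_isThresholds {k : ℕ} {f : ℝ → Y} :
    Piecewise H k f ↔ ∃ (t : ℕ → EReal) (h : ℕ → ℝ → Y), IsThresholds k t ∧
      (∀ i, 1 ≤ i → i ≤ k → h i ∈ H) ∧ ∀ x i, 1 ≤ i → i ≤ k → x ∈ piece t i → f x = h i x := by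
  constructor
  · rintro ⟨t, h, h0, hk, hstep, hreal, hH, hf⟩
    exact ⟨t, h, ⟨h0, hk, monotone_nat_of_le_succ hstep, hreal⟩, hH,
      fun x i h1 h2 hx => hf x i h1 h2 hx.1 hx.2⟩
  · rintro ⟨t, h, ht, hH, hf⟩
    exact ⟨t, h, ht.zero, ht.last, fun i => ht.mono i.le_succ, ht.real, hH,
      fun x i h1 h2 hlt hle => hf x i h1 h2 ⟨hlt, hle⟩⟩

lemma IsThresholds.piecewise_pieceIdx {n : ℕ} {t : ℕ → EReal} (ht : IsThresholds n t)
    {h : ℕ → ℝ → Y} (hH : ∀ i, 1 ≤ i → i ≤ n → h i ∈ H) :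
    Piecewise H n (fun x => h (pieceIdx t x) x) :=
  piecewise_iff_exists_isThresholds.2
    ⟨t, h, ht, hH, fun x _ _ _ hx => by rw [pieceIdx_eq_of_mem_piece ht.mono hx]⟩

lemma Fclass_mono {n k : ℕ} (hn : 1 ≤ n) (hnk : n ≤ k) : Fclass H n ⊆ Fclass H k := by
  intro f hf
  obtain ⟨t, h, ht, hH, hfh⟩ := piecewise_iff_exists_isThresholds.1 hf
  obtain ⟨r, hr⟩ : ∃ r : ℝ, t (n - 1) ≤ r := by
    rcases Nat.eq_zero_or_pos (n - 1) with h0 | hpos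
    · exact ⟨0, by simp [h0, ht.zero]⟩
    · obtain ⟨r, hr⟩ := ht.real (n - 1) hpos le_rfl
      exact ⟨r, hr.le⟩
  -- cut the last piece `(t (n - 1), ⊤]` at `r`, repeating `h n` on the new pieces
  let s : ℕ → EReal := fun i => if i < n then t i else if i < k then r else ⊤
  have htop : ∀ i, n ≤ i → t i = ⊤ := fun i hi => top_le_iff.1 (ht.last ▸ ht.mono hi)
  have hs : IsThresholds k s := by
    refine ⟨by simp [s, show 0 < n by omega, ht.zero], by simp [s, hnk], fun i j hij => ?_,
      fun i h1 h2 => ?_⟩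
    · simp only [s]
      split_ifs <;> first | exact le_top | exact le_rfl | exact ht.mono (by omega) |
        exact (ht.mono (by omega)).trans hr | omega
    · simp only [s]
      split_ifs
      · exact ht.real i h1 (by omega)
      · exact ⟨r, rfl⟩
      · omega
  refine piecewise_iff_exists_isThresholds.2 ⟨s, fun i => h (min i n), hs,
    fun i h1 _ => hH _ (le_min h1 hn) (min_le_right _ _), fun x i h1 h2 hx => ?_⟩
  refine hfh x _ (le_min h1 hn) (min_le_right _ _) ⟨lt_of_le_of_lt ?_ hx.1, hx.2.trans ?_⟩
  · simp only [s]
    split_ifs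
    · exact ht.mono (by omega)
    · exact (ht.mono (by omega)).trans hr
    · exact le_top
  · rcases le_or_gt n i with hi | hi
    · rw [htop _ (le_min hi le_rfl)]
      exact le_top
    · simp only [s, if_pos hi]
      exact ht.mono (by omega)

lemma exists_mem_Fclass_eq_of_notMem_piece {n : ℕ} (hn : 1 ≤ n) {t : ℕ → EReal}
    {h : ℕ → ℝ → Y} {f : ℝ → Y} (ht : IsThresholds (n + 1) t)
    (hH : ∀ i, 1 ≤ i → i ≤ n + 1 → h i ∈ H)
    (hf : ∀ x i, 1 ≤ i → i ≤ n + 1 → x ∈ piece t i → f x = h i x)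
    {j : ℕ} (hj1 : 1 ≤ j) (hjn : j ≤ n + 1) :
    ∃ g ∈ Fclass H n, ∀ x, x ∉ piece t j → f x = g x := by
  -- `σ` drops the threshold `t d`, merging pieces `d` and `d + 1`, and `τ` drops `h j`,
  -- so that the merged piece carries the function of its other half.
  let d := min j n
  let σ : ℕ → ℕ := fun a => if a < d then a else a + 1
  let τ : ℕ → ℕ := fun a => if a < j then a else a + 1
  have hσ : Monotone σ := monotone_nat_of_le_succ fun a => by simp only [σ]; split_ifs <;> omega
  have hσ0 : σ 0 = 0 := if_pos (by omega)
  have hσn : σ n = n + 1 := if_neg (by omega)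
  have hs : IsThresholds n (t ∘ σ) := by
    refine ⟨by simp [hσ0, ht.zero], by simp [hσn, ht.last], ht.mono.comp hσ,
      fun a h1 h2 => ht.real (σ a) ?_ ?_⟩ <;> simp only [σ] <;> split_ifs <;> omega
  have hτ : ∀ a, 1 ≤ a → a ≤ n → h (τ a) ∈ H := fun a h1 h2 =>
    hH (τ a) (by simp only [τ]; split_ifs <;> omega) (by simp only [τ]; split_ifs <;> omega)
  refine ⟨_, hs.piecewise_pieceIdx (h := h ∘ τ) hτ, fun x hx => ?_⟩
  obtain ⟨hi1, hin, hxi⟩ := ht.mem_piece_pieceIdx x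
  set i := pieceIdx t x
  have hij : i ≠ j := fun hij => hx (hij ▸ hxi)
  -- the index of the new piece containing the old piece `i`
  let a := if i ≤ d then i else i - 1
  have hlo : σ (a - 1) ≤ i - 1 := by simp only [σ, a]; split_ifs <;> omega
  have hhi : i ≤ σ a := by simp only [σ, a]; split_ifs <;> omega
  have hτa : τ a = i := by simp only [τ, a]; split_ifs <;> omega
  have hxa : x ∈ piece (t ∘ σ) a := ⟨(ht.mono hlo).trans_lt hxi.1, hxi.2.trans (ht.mono hhi)⟩
  rw [comp_apply, pieceIdx_eq_of_mem_piece hs.mono hxa, hτa]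
  exact hf x i hi1 hin hxi

lemma exists_mem_Fclass_distP_le_inv {n : ℕ} (hn : 1 ≤ n) {f : ℝ → Y}
    (hf : f ∈ Fclass H (n + 1)) : ∃ g ∈ Fclass H n, distP f g ≤ 1 / (n + 1) := by
  obtain ⟨t, h, ht, hH, hfh⟩ := piecewise_iff_exists_isThresholds.1 hf
  obtain ⟨j, hj, hsmall⟩ := (Finset.Icc 1 (n + 1)).exists_card_mul_measureReal_le uniform01
    ⟨1, by simp⟩ ((pairwise_disjoint_piece ht.mono).set_pairwise _)
    fun i _ => measurableSet_piece t i
  obtain ⟨g, hg, hfg⟩ := exists_mem_Fclass_eq_of_notMem_piece hn ht hH hfh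
    (Finset.mem_Icc.1 hj).1 (Finset.mem_Icc.1 hj).2
  refine ⟨g, hg, ?_⟩
  have hdist : distP f g ≤ uniform01.real (piece t j) := by
    rw [distP_eq_measureReal]
    exact measureReal_mono fun x hx => by_contra fun hxj => hx (hfg x hxj)
  have hunion : uniform01.real (⋃ i ∈ Finset.Icc 1 (n + 1), piece t i) ≤ 1 :=
    (measureReal_mono (subset_univ _)).trans (by simp)
  rw [Nat.card_Icc, Nat.add_sub_cancel] at hsmall
  push_cast at hsmall
  rw [le_div_iff₀ (by positivity)]
  nlinarith

lemma exists_mem_Fclass_distP_le {k : ℕ} (hk : 1 ≤ k) (j : ℕ) {f : ℝ → Y}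
    (hf : f ∈ Fclass H (k + j)) : ∃ g ∈ Fclass H k, distP f g ≤ j / (k + 1) := by
  induction j generalizing f with
  | zero => exact ⟨f, hf, by simp [distP_self]⟩
  | succ j ih =>
    obtain ⟨f₁, hf₁, hff₁⟩ := exists_mem_Fclass_distP_le_inv (n := k + j) (by omega) hf
    obtain ⟨g, hg, hf₁g⟩ := ih hf₁
    refine ⟨g, hg, (distP_triangle f f₁ g).trans ?_⟩
    have hstep : 1 / ((k + j : ℕ) + 1 : ℝ) ≤ 1 / (k + 1) :=
      one_div_le_one_div_of_le (by positivity) (by simp)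
    rw [Nat.cast_succ, add_div]
    linarith

end Piecewise

theorem dist_to_Fk_lt_half_eps_general
    {Y : Type*}
    (H : Set (ℝ → Y))
    (ε : ℝ) (hε : ε ∈ Set.Ioo (0:ℝ) (1/2)) (k : ℕ) (hk : 2 ≤ k)
    (m : ℕ) (hm : (m : ℝ) ≤ ((k : ℝ) - 1) * (1 + ε / 2))
    (g' : ℝ → Y) (hg' : g' ∈ Fclass H (m + 1)) :
    distToClass g' (Fclass H k) < ε / 2 := by
  obtain ⟨hε, -⟩ := hε
  rcases le_or_gt (m + 1) k with hmk | hkm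
  · calc distToClass g' (Fclass H k) ≤ distP g' g' :=
          distToClass_le_distP g' (Fclass_mono (by omega) hmk hg')
      _ = 0 := distP_self g'
      _ < ε / 2 := by positivity
  · obtain ⟨j, hj⟩ := Nat.exists_eq_add_of_le hkm.le
    rw [hj] at hg'
    obtain ⟨g, hg, hdist⟩ := exists_mem_Fclass_distP_le (by omega) j hg'
    have hjR : (m : ℝ) + 1 = k + j := by exact_mod_cast hj
    calc distToClass g' (Fclass H k) ≤ distP g' g := distToClass_le_distP g' hg
      _ ≤ j / (k + 1) := hdist
      _ < ε / 2 := by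
        rw [div_lt_iff₀ (by positivity)]
        nlinarith

/-- Fix `ε ∈ (0,1/2)` and `k ≥ 2`.  For any nonnegative integer `m` with
`m ≤ (k-1)(1 + ε/2)`, every `g' ∈ F_{m+1}(H)` satisfies `dist(g', F_k(H)) < ε/2`. -/
theorem dist_to_Fk_lt_half_eps
    {Y : Type*} [MeasurableSpace Y] [Nonempty Y]
    (H : Set (ℝ → Y)) (hHne : H.Nonempty)
    (ε : ℝ) (hε : ε ∈ Set.Ioo (0:ℝ) (1/2)) (k : ℕ) (hk : 2 ≤ k)
    (m : ℕ) (hm : (m : ℝ) ≤ ((k : ℝ) - 1) * (1 + ε / 2))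
    (g' : ℝ → Y) (hg' : g' ∈ Fclass H (m + 1)) :
    distToClass g' (Fclass H k) < ε / 2 :=
  dist_to_Fk_lt_half_eps_general H ε hε k hk m hm g' hg'
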